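/- arXiv:math/0607392 — 3 statements merged into one kernel-verified Lean document; each statement's English description precedes it below -/
import Mathlib

section
/- Every 3-dimensional real Lie algebra l which is semisimple and admits an inner product for which all adjoint maps ad_X are skew-adjoint is isomorphic to so(3). -/
open Matrix
attribute [local instance 100] LieRing.ofAssociativeRing

/-- `so(3)`: the Lie algebra of real skew-symmetric 3×3 matrices (skew-adjoint with respect to
the identity bilinear form). -/
noncomputable def so3 : LieSubalgebra ℝ (Matrix (Fin 3) (Fin 3) ℝ) :=
  skewAdjointMatricesLieSubalgebra (1 : Matrix (Fin 3) (Fin 3) ℝ)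

def A0 : Matrix (Fin 3) (Fin 3) ℝ := !![0,0,0;0,0,-1;0,1,0]
def A1 : Matrix (Fin 3) (Fin 3) ℝ := !![0,0,1;0,0,0;-1,0,0]
def A2 : Matrix (Fin 3) (Fin 3) ℝ := !![0,-1,0;1,0,0;0,0,0]

lemma skewmem {A : Matrix (Fin 3) (Fin 3) ℝ} (h : Aᵀ = -A) : A ∈ so3 := by
  rw [so3, mem_skewAdjointMatricesLieSubalgebra, mem_skewAdjointMatricesSubmodule]
  simp [Matrix.IsSkewAdjoint, Matrix.IsAdjointPair, h]

lemma hA0 : A0 ∈ so3 := skewmem (by ext i j; fin_cases i <;> fin_cases j <;> simp [A0, Matrix.vecHead, Matrix.vecTail])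

lemma hA1 : A1 ∈ so3 := skewmem (by ext i j; fin_cases i <;> fin_cases j <;> simp [A1, Matrix.vecHead, Matrix.vecTail])
lemma hA2 : A2 ∈ so3 := skewmem (by ext i j; fin_cases i <;> fin_cases j <;> simp [A2, Matrix.vecHead, Matrix.vecTail])

noncomputable def aA : Fin 3 → so3 := ![⟨A0, hA0⟩, ⟨A1, hA1⟩, ⟨A2, hA2⟩]

lemma matbr : ⁅A0, A1⁆ = A2 := by
  rw [Ring.lie_def]
  ext i j
  fin_cases i <;> fin_cases j <;>
    simp [A0, A1, A2, Matrix.mul_apply, Fin.sum_univ_three, Matrix.vecHead, Matrix.vecTail]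

lemma br01 : ⁅aA 0, aA 1⁆ = aA 2 := by
  apply Subtype.ext
  rw [LieSubalgebra.coe_bracket]
  exact matbr

@[simp] lemma so3_coe_smul (r : ℝ) (x : so3) :
    ((r • x : so3) : Matrix (Fin 3) (Fin 3) ℝ) = r • (x : Matrix (Fin 3) (Fin 3) ℝ) := rfl

lemma skew_entries {A : Matrix (Fin 3) (Fin 3) ℝ} (h : A ∈ so3) : Aᵀ = -A := by
  rw [so3, mem_skewAdjointMatricesLieSubalgebra, mem_skewAdjointMatricesSubmodule] at h
  simpa [Matrix.IsSkewAdjoint, Matrix.IsAdjointPair] using h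

lemma aA_span (m : so3) : m = (m.1 2 1) • aA 0 + (m.1 0 2) • aA 1 + (m.1 1 0) • aA 2 := by
  have h := skew_entries m.2
  have he : ∀ i j : Fin 3, m.1 j i = -(m.1 i j) := by
    intro i j
    have := congrFun (congrFun h i) j
    simpa [Matrix.transpose_apply] using this
  apply Subtype.ext
  have hd0 := he 0 0; have hd1 := he 1 1; have hd2 := he 2 2
  ext i j
  fin_cases i <;> fin_cases j <;>
    simp [aA, A0, A1, A2, SetLike.val_smul, Matrix.smul_apply, smul_eq_mul,
      Matrix.vecHead, Matrix.vecTail] <;> linarith [he 0 1, he 0 2, he 1 2]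

lemma aA_li : LinearIndependent ℝ aA := by
  rw [Fintype.linearIndependent_iff]
  intro c hc i
  have h1 := congrArg (fun m : so3 => m.1 2 1) hc
  have h2 := congrArg (fun m : so3 => m.1 0 2) hc
  have h3 := congrArg (fun m : so3 => m.1 1 0) hc
  simp [Fin.sum_univ_three, aA, A0, A1, A2, SetLike.val_smul, Matrix.smul_apply, smul_eq_mul,
    Matrix.vecHead, Matrix.vecTail] at h1 h2 h3
  fin_cases i <;> assumption

lemma matbr12 : ⁅A1, A2⁆ = A0 := by
  rw [Ring.lie_def]
  ext i j
  fin_cases i <;> fin_cases j <;>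
    simp [A0, A1, A2, Matrix.mul_apply, Fin.sum_univ_three, Matrix.vecHead, Matrix.vecTail]

lemma matbr20 : ⁅A2, A0⁆ = A1 := by
  rw [Ring.lie_def]
  ext i j
  fin_cases i <;> fin_cases j <;>
    simp [A0, A1, A2, Matrix.mul_apply, Fin.sum_univ_three, Matrix.vecHead, Matrix.vecTail]

lemma br12 : ⁅aA 1, aA 2⁆ = aA 0 := Subtype.ext (by rw [LieSubalgebra.coe_bracket]; exact matbr12)
lemma br20 : ⁅aA 2, aA 0⁆ = aA 1 := Subtype.ext (by rw [LieSubalgebra.coe_bracket]; exact matbr20)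

noncomputable def abasis : Module.Basis (Fin 3) ℝ so3 :=
  Module.Basis.mk aA_li (by
    rw [top_le_iff, eq_top_iff]
    rintro m -
    rw [aA_span m]
    refine add_mem (add_mem ?_ ?_) ?_ <;>
      exact Submodule.smul_mem _ _ (Submodule.subset_span ⟨_, rfl⟩))

@[simp] lemma abasis_apply (i : Fin 3) : abasis i = aA i := Module.Basis.mk_apply _ _ i

/-- Every 3-dimensional semisimple real Lie algebra admitting an inner product for which all
adjoint maps are skew-adjoint is isomorphic to `so(3)`. -/
theorem stmt12 (L : Type*) [LieRing L] [LieAlgebra ℝ L] [Module.Finite ℝ L]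
    (h3 : Module.finrank ℝ L = 3) (hss : LieAlgebra.IsSemisimple ℝ L)
    (g : L →ₗ[ℝ] L →ₗ[ℝ] ℝ)
    (hsymm : ∀ X Y : L, g X Y = g Y X)
    (hpos : ∀ X : L, X ≠ 0 → 0 < g X X)
    (hskew : ∀ X Y Z : L, g ⁅X, Y⁆ Z = -(g Y ⁅X, Z⁆)) :
    Nonempty (L ≃ₗ⁅ℝ⁆ so3) := by
  letI core : InnerProductSpace.Core ℝ L :=
  { inner := fun x y => g x y
    conj_inner_symm := fun x y => by simpa using hsymm y x
    re_inner_nonneg := fun x => by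
      by_cases hx : x = 0
      · simp [hx]
      · exact le_of_lt (by simpa using hpos x hx)
    add_left := fun x y z => by simp
    smul_left := fun x y r => by simp
    definite := fun x hx => by
      by_contra h
      exact (hpos x h).ne' (by simpa using hx) }
  letI : NormedAddCommGroup L := core.toNormedAddCommGroup
  letI : InnerProductSpace ℝ L := InnerProductSpace.ofCore core.toCore
  haveI : FiniteDimensional ℝ L := ‹Module.Finite ℝ L›
  let b : OrthonormalBasis (Fin 3) ℝ L := (stdOrthonormalBasis ℝ L).reindex (finCongr h3)
  -- alternating properties
  have hzero1 : ∀ X Y : L, g ⁅X, Y⁆ Y = 0 := by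
    intro X Y
    have h := hskew X Y Y
    rw [hsymm Y ⁅X, Y⁆] at h
    linarith
  have hzero2 : ∀ X Y : L, g ⁅X, Y⁆ X = 0 := by
    intro X Y
    have h := hskew X Y X
    simp at h
    exact h
  have haux : ∀ X Y Z : L, g ⁅X, Y⁆ Z = g ⁅Z, X⁆ Y := by
    intro X Y Z
    rw [hskew X Y Z, hsymm Y ⁅X, Z⁆, (lie_skew Z X).symm, map_neg]
    simp
  have hcyc : ∀ X Y Z : L, g ⁅X, Y⁆ Z = g ⁅Y, Z⁆ X := by
    intro X Y Z
    rw [haux X Y Z, haux Z X Y]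
  set c := g ⁅b 0, b 1⁆ (b 2) with hc
  have hexp : ∀ x : L, x = g (b 0) x • b 0 + g (b 1) x • b 1 + g (b 2) x • b 2 := by
    intro x
    have h := b.sum_repr' x
    rw [Fin.sum_univ_three] at h
    exact h.symm
  have hb01 : ⁅b 0, b 1⁆ = c • b 2 := by
    have h := hexp ⁅b 0, b 1⁆
    rw [hsymm (b 0), hsymm (b 1), hsymm (b 2), hzero2, hzero1, ← hc] at h
    simpa using h
  have hb12 : ⁅b 1, b 2⁆ = c • b 0 := by
    have h := hexp ⁅b 1, b 2⁆
    rw [hsymm (b 0), hsymm (b 1), hsymm (b 2), hzero2, hzero1] at h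
    have e : g ⁅b 1, b 2⁆ (b 0) = c := by rw [hcyc, hcyc]
    rw [e] at h
    simpa using h
  have hb20 : ⁅b 2, b 0⁆ = c • b 1 := by
    have h := hexp ⁅b 2, b 0⁆
    rw [hsymm (b 0), hsymm (b 1), hsymm (b 2), hzero2, hzero1] at h
    have e : g ⁅b 2, b 0⁆ (b 1) = c := by rw [hcyc]
    rw [e] at h
    simpa using h
  have hcne : c ≠ 0 := by
    intro h0
    rw [h0, zero_smul] at hb01 hb12 hb20
    have hbb : ∀ i j : Fin 3, ⁅b i, b j⁆ = (0 : L) := by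
      intro i j
      fin_cases i <;> fin_cases j <;>
        first
          | exact lie_self _
          | assumption
          | (rw [← lie_skew, neg_eq_zero]; assumption)
    have habel : IsLieAbelian L := by
      constructor
      intro x y
      conv_lhs => rw [hexp x, hexp y]
      simp [lie_add, add_lie, lie_smul, smul_lie, hbb]
    haveI := habel
    have hsub : Subsingleton L :=
      LieAlgebra.subsingleton_of_hasTrivialRadical_lie_abelian (R := ℝ) (L := L)
    rw [Module.finrank_zero_of_subsingleton] at h3
    exact absurd h3 (by norm_num)
  -- scaled basis
  let u : Fin 3 → ℝˣ := fun _ => Units.mk0 c⁻¹ (inv_ne_zero hcne)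
  let fb : Module.Basis (Fin 3) ℝ L := b.toBasis.unitsSMul u
  have hfb : ∀ i, fb i = c⁻¹ • b i := fun i => by
    simp [fb, Module.Basis.unitsSMul_apply, u]
  have hf01 : ⁅fb 0, fb 1⁆ = fb 2 := by
    rw [hfb, hfb, hfb, smul_lie, lie_smul, hb01, smul_smul, smul_smul]
    congr 1
    field_simp
  have hf12 : ⁅fb 1, fb 2⁆ = fb 0 := by
    rw [hfb, hfb, hfb, smul_lie, lie_smul, hb12, smul_smul, smul_smul]
    congr 1
    field_simp
  have hf20 : ⁅fb 2, fb 0⁆ = fb 1 := by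
    rw [hfb, hfb, hfb, smul_lie, lie_smul, hb20, smul_smul, smul_smul]
    congr 1
    field_simp
  let E : L ≃ₗ[ℝ] so3 := fb.equiv abasis (Equiv.refl _)
  have hE : ∀ i, E (fb i) = aA i := fun i => by
    simp [E, Module.Basis.equiv_apply]
  have key : ∀ x y : L, E ⁅x, y⁆ = ⁅E x, E y⁆ := by
    let B1 : L →ₗ[ℝ] L →ₗ[ℝ] so3 :=
      ((LieAlgebra.ad ℝ L : L →ₗ⁅ℝ⁆ Module.End ℝ L) : L →ₗ[ℝ] L →ₗ[ℝ] L).compr₂ E.toLinearMap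
    let B2 : L →ₗ[ℝ] L →ₗ[ℝ] so3 :=
      ((((LieAlgebra.ad ℝ so3 : so3 →ₗ⁅ℝ⁆ Module.End ℝ so3) :
        so3 →ₗ[ℝ] so3 →ₗ[ℝ] so3).comp E.toLinearMap).compl₂ E.toLinearMap)
    have hB : B1 = B2 := by
      apply LinearMap.ext_basis fb fb
      intro i j
      show E ⁅fb i, fb j⁆ = ⁅E (fb i), E (fb j)⁆
      have hf10 : ⁅fb 1, fb 0⁆ = -fb 2 := by rw [← lie_skew, hf01]
      have hf21 : ⁅fb 2, fb 1⁆ = -fb 0 := by rw [← lie_skew, hf12]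
      have hf02 : ⁅fb 0, fb 2⁆ = -fb 1 := by rw [← lie_skew, hf20]
      have ha10 : ⁅aA 1, aA 0⁆ = -aA 2 := by rw [← lie_skew, br01]
      have ha21 : ⁅aA 2, aA 1⁆ = -aA 0 := by rw [← lie_skew, br12]
      have ha02 : ⁅aA 0, aA 2⁆ = -aA 1 := by rw [← lie_skew, br20]
      fin_cases i <;> fin_cases j <;>
        simp [hf01, hf12, hf20, hf10, hf21, hf02, hE, br01, br12, br20, ha10, ha21, ha02]
    intro x y
    exact LinearMap.congr_fun (LinearMap.congr_fun hB x) y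
  exact ⟨{ toLieHom := { toLinearMap := E.toLinearMap, map_lie' := fun {x y} => key x y },
           invFun := E.symm, left_inv := E.left_inv, right_inv := E.right_inv }⟩
end

section
/- Let l be a 5-dimensional real Lie algebra with an inner product g such that g([X,Y],Z) is totally skew-symmetric in X, Y, Z, and suppose the derived algebra l¹ = [l,l] is 3-dimensional and satisfies l¹ = [l¹, l¹]. Then l is isomorphic to so(3) ⊕ ℝ². -/
open scoped Matrix

/-- The product of two Lie rings, with componentwise bracket. -/
instance prodLieRing (A B : Type*) [LieRing A] [LieRing B] : LieRing (A × B) where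
  bracket x y := (⁅x.1, y.1⁆, ⁅x.2, y.2⁆)
  add_lie x y z := Prod.ext (add_lie x.1 y.1 z.1) (add_lie x.2 y.2 z.2)
  lie_add x y z := Prod.ext (lie_add x.1 y.1 z.1) (lie_add x.2 y.2 z.2)
  lie_self x := Prod.ext (lie_self x.1) (lie_self x.2)
  leibniz_lie x y z :=
    Prod.ext (leibniz_lie x.1 y.1 z.1) (leibniz_lie x.2 y.2 z.2)

/-- The product of two real Lie algebras. -/
instance prodLieAlgebra (A B : Type*) [LieRing A] [LieRing B]
    [LieAlgebra ℝ A] [LieAlgebra ℝ B] : LieAlgebra ℝ (A × B) where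
  lie_smul c x y := Prod.ext (lie_smul c x.1 y.1) (lie_smul c x.2 y.2)

attribute [local instance 100] LieRing.ofAssociativeRing

def mA : Fin 3 → Matrix (Fin 3) (Fin 3) ℝ :=
  ![!![0,0,0;0,0,-1;0,1,0], !![0,0,1;0,0,0;-1,0,0], !![0,-1,0;1,0,0;0,0,0]]

lemma mA_skew_expand (M : Matrix (Fin 3) (Fin 3) ℝ) (h : M ∈ so3) :
    M = M 2 1 • mA 0 + M 0 2 • mA 1 + M 1 0 • mA 2 := by
  rw [so3, mem_skewAdjointMatricesLieSubalgebra, mem_skewAdjointMatricesSubmodule] at h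
  replace h : Mᵀ = -M := by simpa [Matrix.IsSkewAdjoint, Matrix.IsAdjointPair] using h
  have he : ∀ i j, M j i = - M i j := fun i j => by
    have := congrFun (congrFun h i) j
    simpa [Matrix.transpose_apply] using this
  have hd : ∀ i, M i i = 0 := fun i => by
    have := he i i; linarith
  ext i j
  fin_cases i <;> fin_cases j <;>
    simp [mA, hd, he 1 2, he 0 2, he 0 1, Matrix.vecHead, Matrix.vecTail]

lemma mA_mem (i : Fin 3) : mA i ∈ so3 := by
  rw [so3, mem_skewAdjointMatricesLieSubalgebra, mem_skewAdjointMatricesSubmodule]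
  show _ * _ = _ * _
  fin_cases i <;> (ext i j; fin_cases i <;> fin_cases j <;>
    simp [mA, Matrix.mul_apply, Fin.sum_univ_three, Matrix.vecHead, Matrix.vecTail])

lemma mA_br01 : ⁅mA 0, mA 1⁆ = mA 2 := by
  show mA 0 * mA 1 - mA 1 * mA 0 = mA 2
  ext i j; fin_cases i <;> fin_cases j <;>
    simp [mA, Matrix.mul_apply, Fin.sum_univ_three, Matrix.vecHead, Matrix.vecTail]

lemma mA_br12 : ⁅mA 1, mA 2⁆ = mA 0 := by
  show mA 1 * mA 2 - mA 2 * mA 1 = mA 0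
  ext i j; fin_cases i <;> fin_cases j <;>
    simp [mA, Matrix.mul_apply, Fin.sum_univ_three, Matrix.vecHead, Matrix.vecTail]

lemma mA_br20 : ⁅mA 2, mA 0⁆ = mA 1 := by
  show mA 2 * mA 0 - mA 0 * mA 2 = mA 1
  ext i j; fin_cases i <;> fin_cases j <;>
    simp [mA, Matrix.mul_apply, Fin.sum_univ_three, Matrix.vecHead, Matrix.vecTail]

noncomputable def Aso (i : Fin 3) : so3 := ⟨mA i, mA_mem i⟩

lemma Aso_br01 : ⁅Aso 0, Aso 1⁆ = Aso 2 := Subtype.ext (by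
  rw [LieSubalgebra.coe_bracket]; exact mA_br01)
lemma Aso_br12 : ⁅Aso 1, Aso 2⁆ = Aso 0 := Subtype.ext (by
  rw [LieSubalgebra.coe_bracket]; exact mA_br12)
lemma Aso_br20 : ⁅Aso 2, Aso 0⁆ = Aso 1 := Subtype.ext (by
  rw [LieSubalgebra.coe_bracket]; exact mA_br20)

lemma so3_expand (M : so3) :
    M = M.val 2 1 • Aso 0 + M.val 0 2 • Aso 1 + M.val 1 0 • Aso 2 := by
  apply Subtype.ext
  push_cast [Aso]
  exact mA_skew_expand M.val M.2

lemma pi_br (a b : Fin 2 → ℝ) : ⁅a, b⁆ = 0 := by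
  funext i
  show ⁅a i, b i⁆ = 0
  simp [Ring.lie_def, mul_comm]

set_option maxHeartbeats 1000000 in
/-- Let `l` be a 5-dimensional real Lie algebra with an inner product `g` such that
`g([X,Y],Z)` is totally skew-symmetric in `X, Y, Z`, and suppose `l¹ = [l,l]` is 3-dimensional
with `l¹ = [l¹,l¹]`. Then `l ≅ so(3) ⊕ ℝ²`. -/
theorem stmt13 (L : Type*) [LieRing L] [LieAlgebra ℝ L] [Module.Finite ℝ L]
    (h5 : Module.finrank ℝ L = 5)
    (g : L →ₗ[ℝ] L →ₗ[ℝ] ℝ)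
    (hsymm : ∀ X Y : L, g X Y = g Y X)
    (hpos : ∀ X : L, X ≠ 0 → 0 < g X X)
    (hskew₁ : ∀ X Y Z : L, g ⁅X, Y⁆ Z = -(g ⁅Y, X⁆ Z))
    (hskew₂ : ∀ X Y Z : L, g ⁅X, Y⁆ Z = -(g ⁅X, Z⁆ Y))
    (hdim : Module.finrank ℝ (LieAlgebra.derivedSeries ℝ L 1) = 3)
    (hperf : LieAlgebra.derivedSeries ℝ L 2 = LieAlgebra.derivedSeries ℝ L 1) :
    Nonempty (L ≃ₗ⁅ℝ⁆ (so3 × (Fin 2 → ℝ))) := by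
  classical
  have hFD : FiniteDimensional ℝ L := ‹Module.Finite ℝ L›
  -- inner product structure from g
  letI core : InnerProductSpace.Core ℝ L :=
  { inner := fun x y => g x y
    conj_inner_symm := fun x y => by simpa using hsymm y x
    re_inner_nonneg := fun x => by
      rcases eq_or_ne x 0 with h | h
      · simp [h]
      · simpa using (hpos x h).le
    add_left := fun x y z => by simp
    smul_left := fun x y r => by simp
    definite := fun x hx => by
      by_contra h
      exact absurd hx (ne_of_gt (hpos x h)) }
  letI : NormedAddCommGroup L := core.toNormedAddCommGroup
  letI : InnerProductSpace ℝ L := InnerProductSpace.ofCore core.toCore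
  have hinner : ∀ x y : L, (inner ℝ x y : ℝ) = g x y := fun x y => rfl
  set ND := LieAlgebra.derivedSeries ℝ L 1 with hNDdef
  set Dsub : Submodule ℝ L := LieSubmodule.toSubmodule ND with hDdef
  have hdimD : Module.finrank ℝ Dsub = 3 := hdim
  set C : Submodule ℝ L := Dsubᗮ with hCdef
  have hcompl : IsCompl Dsub C := Submodule.isCompl_orthogonal_of_hasOrthogonalProjection
  have hC2 : Module.finrank ℝ C = 2 := by
    have h := Submodule.finrank_add_finrank_orthogonal (K := Dsub)
    rw [hdimD, h5, ← hCdef] at h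
    omega
  -- cyclic symmetry
  have cyc : ∀ X Y Z : L, g ⁅X, Y⁆ Z = g ⁅Z, X⁆ Y := fun X Y Z => by
    rw [hskew₂ X Y Z, hskew₁ X Z Y]; ring
  have alt2 : ∀ X Y : L, g ⁅X, Y⁆ Y = 0 := fun X Y => by
    have := hskew₂ X Y Y; linarith
  have alt1 : ∀ X Y : L, g ⁅X, Y⁆ X = 0 := fun X Y => by
    rw [cyc]; simp
  -- orthogonal complement of D is central
  have central : ∀ x ∈ C, ∀ y : L, ⁅x, y⁆ = 0 := by
    intro x hx y
    by_contra hne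
    set w : L := ⁅x, y⁆ with hw
    have hmem : ⁅y, w⁆ ∈ Dsub := by
      show ⁅y, w⁆ ∈ ND
      rw [hNDdef, LieAlgebra.derivedSeries_def]
      exact LieSubmodule.lie_mem_lie (LieSubmodule.mem_top y) (LieSubmodule.mem_top w)
    have h0 : g w w = 0 := by
      have h1 : g ⁅x, y⁆ w = g ⁅y, w⁆ x := by rw [cyc x y w, cyc w x y]
      have h2 : (inner ℝ (⁅y, w⁆ : L) x : ℝ) = 0 :=
        (Submodule.mem_orthogonal Dsub x).1 hx _ hmem
      rw [← hw] at h1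
      rw [h1, ← hinner]
      exact h2
    exact absurd h0 (ne_of_gt (hpos w hne))
  -- orthonormal basis of D
  haveI : FiniteDimensional ℝ Dsub := inferInstance
  let eD : OrthonormalBasis (Fin 3) ℝ Dsub :=
    (stdOrthonormalBasis ℝ Dsub).reindex (finCongr hdimD)
  set E : Fin 3 → L := fun i => (eD i : L) with hE
  have hEmem : ∀ i, E i ∈ Dsub := fun i => (eD i).2
  have hip : ∀ i j, g (E i) (E j) = if i = j then 1 else 0 := by
    intro i j
    have horth := eD.orthonormal
    rw [orthonormal_iff_ite] at horth
    have := horth i j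
    rw [Submodule.coe_inner] at this
    simpa [hinner] using this
  have key : ∀ v ∈ Dsub, (∀ i, g (E i) v = 0) → v = 0 := by
    intro v hv h0
    have hz : (⟨v, hv⟩ : Dsub) = 0 := by
      apply eD.repr.injective
      ext i
      rw [map_zero]
      rw [eD.repr_apply_apply]
      show (inner ℝ (E i) v : ℝ) = (0 : EuclideanSpace ℝ (Fin 3)) i
      rw [hinner, h0 i]
      simp
    simpa using congrArg Subtype.val hz
  -- structure constants
  set c : ℝ := g ⁅E 0, E 1⁆ (E 2) with hc
  have hc12 : g ⁅E 1, E 2⁆ (E 0) = c := by rw [hc, cyc (E 0) (E 1) (E 2), cyc (E 2) (E 0) (E 1)]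
  have hc20 : g ⁅E 2, E 0⁆ (E 1) = c := by rw [hc, cyc (E 0) (E 1) (E 2)]
  have hbrmem : ∀ (x : L) (y : L), y ∈ Dsub → ⁅x, y⁆ ∈ Dsub := fun x y hy => ND.lie_mem hy
  have hbkey : ∀ i j k : Fin 3, (∀ l : Fin 3, l = i ∨ l = j ∨ l = k) →
      g ⁅E i, E j⁆ (E k) = c → ⁅E i, E j⁆ = c • E k := by
    intro i j k hcov hijk
    have hsub : ⁅E i, E j⁆ - c • E k ∈ Dsub :=
      Submodule.sub_mem _ (hbrmem _ _ (hEmem j)) (Submodule.smul_mem _ _ (hEmem k))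
    have h0 : ∀ l, g (E l) (⁅E i, E j⁆ - c • E k) = 0 := by
      intro l
      rw [map_sub, map_smul]
      rw [hsymm (E l) ⁅E i, E j⁆]
      by_cases hlk : l = k
      · subst hlk
        rw [hijk, hip]
        simp
      · have h1 : g ⁅E i, E j⁆ (E l) = 0 := by
          rcases hcov l with h | h | h
          · rw [h]; exact alt1 _ _
          · rw [h]; exact alt2 _ _
          · exact absurd h hlk
        rw [h1, hip]
        simp [hlk]
    have := key _ hsub h0
    rw [sub_eq_zero] at this
    exact this
  have hb01 : ⁅E 0, E 1⁆ = c • E 2 := hbkey 0 1 2 (by decide) hc.symm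
  have hb12 : ⁅E 1, E 2⁆ = c • E 0 := hbkey 1 2 0 (by decide) hc12
  have hb20 : ⁅E 2, E 0⁆ = c • E 1 := hbkey 2 0 1 (by decide) hc20
  -- c is nonzero
  have hcne : c ≠ 0 := by
    intro hc0
    have hallz : ∀ i j : Fin 3, ⁅E i, E j⁆ = (0 : L) := by
      have z01 : ⁅E 0, E 1⁆ = (0:L) := by rw [hb01, hc0, zero_smul]
      have z12 : ⁅E 1, E 2⁆ = (0:L) := by rw [hb12, hc0, zero_smul]
      have z20 : ⁅E 2, E 0⁆ = (0:L) := by rw [hb20, hc0, zero_smul]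
      have z10 : ⁅E 1, E 0⁆ = (0:L) := by rw [← lie_skew, z01, neg_zero]
      have z21 : ⁅E 2, E 1⁆ = (0:L) := by rw [← lie_skew, z12, neg_zero]
      have z02 : ⁅E 0, E 2⁆ = (0:L) := by rw [← lie_skew, z20, neg_zero]
      intro i j
      fin_cases i <;> fin_cases j <;>
        first
          | exact lie_self _
          | exact z01 | exact z12 | exact z20
          | exact z10 | exact z21 | exact z02
    -- bilinear bracket map on D vanishes
    let T : Dsub →ₗ[ℝ] Dsub →ₗ[ℝ] L := LinearMap.mk₂ ℝ (fun u v => ⁅(u : L), (v : L)⁆)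
      (fun u₁ u₂ v => by push_cast; rw [add_lie])
      (fun r u v => by push_cast; rw [smul_lie])
      (fun u v₁ v₂ => by push_cast; rw [lie_add])
      (fun r u v => by push_cast; rw [lie_smul])
    have hT : T = 0 := by
      apply Module.Basis.ext eD.toBasis
      intro i
      apply Module.Basis.ext eD.toBasis
      intro j
      show ⁅((eD.toBasis i : Dsub) : L), ((eD.toBasis j : Dsub) : L)⁆ = (0 : Dsub →ₗ[ℝ] L) (eD.toBasis j)
      rw [eD.coe_toBasis]
      exact (hallz i j).trans (by simp)
    have habel : ∀ x ∈ ND, ∀ m ∈ ND, ⁅x, m⁆ = (0 : L) := by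
      intro x hx m hm
      have : T ⟨x, hx⟩ ⟨m, hm⟩ = ⁅x, m⁆ := rfl
      rw [hT] at this
      simpa using this.symm
    have hbot : LieAlgebra.derivedSeries ℝ L 2 = ⊥ := by
      have : LieAlgebra.derivedSeries ℝ L 2 = ⁅ND, ND⁆ := rfl
      rw [this]
      exact (LieSubmodule.lie_eq_bot_iff _ _).2 habel
    rw [hperf] at hbot
    have h0 : Module.finrank ℝ Dsub = 0 := by
      rw [hDdef, hbot, LieSubmodule.bot_toSubmodule, finrank_bot]
    omega
  -- rescaled basis
  have hcu : ∀ i : Fin 3, IsUnit ((fun _ : Fin 3 => c⁻¹) i) :=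
    fun _ => isUnit_iff_ne_zero.2 (inv_ne_zero hcne)
  let bf : Module.Basis (Fin 3) ℝ Dsub := eD.toBasis.isUnitSMul hcu
  have hbf : ∀ i, ((bf i) : L) = c⁻¹ • E i := fun i => by
    show ((eD.toBasis.isUnitSMul hcu i : Dsub) : L) = _
    rw [Module.Basis.isUnitSMul_apply, Submodule.coe_smul, eD.coe_toBasis]
  have hfbr : ∀ i j k : Fin 3, ⁅E i, E j⁆ = c • E k →
      ⁅((bf i) : L), ((bf j) : L)⁆ = ((bf k) : L) := by
    intro i j k h
    rw [hbf, hbf, hbf, smul_lie, lie_smul, h, smul_smul, smul_smul]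
    congr 1
    field_simp
  -- linear maps between D and so3
  let φ : Dsub →ₗ[ℝ] so3 := bf.constr ℝ Aso
  let ψ : so3 →ₗ[ℝ] Dsub :=
  { toFun := fun M => M.val 2 1 • bf 0 + M.val 0 2 • bf 1 + M.val 1 0 • bf 2
    map_add' := fun M N => by
      have h1 : (M + N).val = M.val + N.val := rfl
      simp only [h1, Matrix.add_apply, add_smul]
      abel
    map_smul' := fun r M => by
      have h1 : (r • M).val = r • M.val := rfl
      simp only [h1, Matrix.smul_apply, smul_eq_mul, mul_smul, RingHom.id_apply, smul_add] }
  have hψ : ∀ M : so3, ψ M = M.val 2 1 • bf 0 + M.val 0 2 • bf 1 + M.val 1 0 • bf 2 :=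
    fun M => rfl
  have hφbf : ∀ i, φ (bf i) = Aso i := fun i => bf.constr_basis ℝ Aso i
  have hψφ : ψ.comp φ = LinearMap.id := by
    apply Module.Basis.ext bf
    intro i
    rw [LinearMap.comp_apply, hφbf, LinearMap.id_apply, hψ]
    have hv : ∀ j, (Aso j).val = mA j := fun j => rfl
    fin_cases i <;>
      rw [hv] <;>
      norm_num [mA, Matrix.vecHead, Matrix.vecTail, Matrix.cons_val_two, Matrix.cons_val_one,
        Matrix.cons_val_zero] <;>
      rfl
  have hφψ : φ.comp ψ = LinearMap.id := by
    apply LinearMap.ext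
    intro M
    rw [LinearMap.comp_apply, hψ, map_add, map_add, map_smul, map_smul, map_smul,
      hφbf, hφbf, hφbf, LinearMap.id_apply]
    exact (so3_expand M).symm
  let φe : Dsub ≃ₗ[ℝ] so3 := LinearEquiv.ofLinear φ ψ hφψ hψφ
  have hφe : ∀ u : Dsub, φe u = φ u := fun u => rfl
  have hliemem : ∀ u v : Dsub, ⁅(u : L), (v : L)⁆ ∈ Dsub := fun u v => hbrmem _ _ v.2
  -- bilinear comparison
  let B1 : Dsub →ₗ[ℝ] Dsub →ₗ[ℝ] so3 := LinearMap.mk₂ ℝ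
    (fun u v => φ ⟨⁅(u : L), (v : L)⁆, hliemem u v⟩)
    (fun u₁ u₂ v => by
      beta_reduce
      have h : (⟨⁅((u₁ + u₂ : Dsub) : L), (v : L)⁆, hliemem _ v⟩ : Dsub)
          = ⟨⁅(u₁ : L), (v : L)⁆, hliemem u₁ v⟩ + ⟨⁅(u₂ : L), (v : L)⁆, hliemem u₂ v⟩ :=
        Subtype.ext (by push_cast; rw [add_lie])
      rw [h, map_add])
    (fun r u v => by
      beta_reduce
      have h : (⟨⁅((r • u : Dsub) : L), (v : L)⁆, hliemem _ v⟩ : Dsub)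
          = r • ⟨⁅(u : L), (v : L)⁆, hliemem u v⟩ :=
        Subtype.ext (by push_cast; rw [smul_lie])
      rw [h, map_smul])
    (fun u v₁ v₂ => by
      beta_reduce
      have h : (⟨⁅(u : L), ((v₁ + v₂ : Dsub) : L)⁆, hliemem u _⟩ : Dsub)
          = ⟨⁅(u : L), (v₁ : L)⁆, hliemem u v₁⟩ + ⟨⁅(u : L), (v₂ : L)⁆, hliemem u v₂⟩ :=
        Subtype.ext (by push_cast; rw [lie_add])
      rw [h, map_add])
    (fun r u v => by
      beta_reduce
      have h : (⟨⁅(u : L), ((r • v : Dsub) : L)⁆, hliemem u _⟩ : Dsub)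
          = r • ⟨⁅(u : L), (v : L)⁆, hliemem u v⟩ :=
        Subtype.ext (by push_cast; rw [lie_smul])
      rw [h, map_smul])
  let B2 : Dsub →ₗ[ℝ] Dsub →ₗ[ℝ] so3 := LinearMap.mk₂ ℝ (fun u v => ⁅φe u, φe v⁆)
    (fun u₁ u₂ v => by beta_reduce; rw [map_add, add_lie])
    (fun r u v => by beta_reduce; rw [map_smul, smul_lie])
    (fun u v₁ v₂ => by beta_reduce; rw [map_add, lie_add])
    (fun r u v => by beta_reduce; rw [map_smul, lie_smul])
  have diag_case : ∀ i : Fin 3, B1 (bf i) (bf i) = B2 (bf i) (bf i) := by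
    intro i
    show φ ⟨⁅((bf i) : L), ((bf i) : L)⁆, hliemem _ _⟩ = ⁅φe (bf i), φe (bf i)⁆
    have h0 : (⟨⁅((bf i) : L), ((bf i) : L)⁆, hliemem (bf i) (bf i)⟩ : Dsub) = 0 :=
      Subtype.ext (by show ⁅((bf i) : L), ((bf i) : L)⁆ = 0; rw [lie_self])
    rw [h0, map_zero, lie_self]
  have pos_case : ∀ i j k : Fin 3, ⁅E i, E j⁆ = c • E k → ⁅Aso i, Aso j⁆ = Aso k →
      B1 (bf i) (bf j) = B2 (bf i) (bf j) := by
    intro i j k hE hA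
    show φ ⟨⁅((bf i) : L), ((bf j) : L)⁆, hliemem _ _⟩ = ⁅φe (bf i), φe (bf j)⁆
    have h0 : (⟨⁅((bf i) : L), ((bf j) : L)⁆, hliemem (bf i) (bf j)⟩ : Dsub) = bf k :=
      Subtype.ext (by show ⁅((bf i) : L), ((bf j) : L)⁆ = ((bf k) : L); exact hfbr i j k hE)
    rw [h0, hφbf]
    show _ = ⁅φ (bf i), φ (bf j)⁆
    rw [hφbf, hφbf, hA]
  have neg_case : ∀ i j k : Fin 3, ⁅E i, E j⁆ = c • E k → ⁅Aso i, Aso j⁆ = Aso k →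
      B1 (bf j) (bf i) = B2 (bf j) (bf i) := by
    intro i j k hE hA
    show φ ⟨⁅((bf j) : L), ((bf i) : L)⁆, hliemem _ _⟩ = ⁅φe (bf j), φe (bf i)⁆
    have h0 : (⟨⁅((bf j) : L), ((bf i) : L)⁆, hliemem (bf j) (bf i)⟩ : Dsub) = -(bf k) :=
      Subtype.ext (by
        show ⁅((bf j) : L), ((bf i) : L)⁆ = -((bf k) : L)
        rw [← lie_skew, hfbr i j k hE])
    rw [h0, map_neg, hφbf]
    show _ = ⁅φ (bf j), φ (bf i)⁆
    rw [hφbf, hφbf, ← lie_skew, hA]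
  have hB : B1 = B2 := by
    apply Module.Basis.ext bf
    intro i
    apply Module.Basis.ext bf
    intro j
    fin_cases i <;> fin_cases j
    · exact diag_case 0
    · exact pos_case 0 1 2 hb01 Aso_br01
    · exact neg_case 2 0 1 hb20 Aso_br20
    · exact neg_case 0 1 2 hb01 Aso_br01
    · exact diag_case 1
    · exact pos_case 1 2 0 hb12 Aso_br12
    · exact pos_case 2 0 1 hb20 Aso_br20
    · exact neg_case 1 2 0 hb12 Aso_br12
    · exact diag_case 2
  have hφlie : ∀ u v : Dsub, φe ⟨⁅(u : L), (v : L)⁆, hliemem u v⟩ = ⁅φe u, φe v⁆ := by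
    intro u v
    have h1 : B1 u v = B2 u v := by rw [hB]
    exact h1
  -- the complement factor
  let χ : C ≃ₗ[ℝ] (Fin 2 → ℝ) := (Module.finBasisOfFinrankEq ℝ C hC2).equivFun
  let P := Submodule.prodEquivOfIsCompl Dsub C hcompl
  let total : L ≃ₗ[ℝ] (so3 × (Fin 2 → ℝ)) := P.symm.trans (φe.prodCongr χ)
  have hcentr : ∀ (q : ↥C) (z : L), ⁅(q : L), z⁆ = 0 := fun q z => central q q.2 z
  have hcentr' : ∀ (q : ↥C) (z : L), ⁅z, (q : L)⁆ = 0 := fun q z => by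
    rw [← lie_skew, hcentr, neg_zero]
  have hmaplie : ∀ x y : L, total ⁅x, y⁆ = ⁅total x, total y⁆ := by
    intro x y
    have hx : x = ((P.symm x).1 : L) + ((P.symm x).2 : L) := by
      conv_lhs => rw [← P.apply_symm_apply x]
      exact Submodule.coe_prodEquivOfIsCompl' (p := Dsub) (q := C) hcompl (P.symm x)
    have hy : y = ((P.symm y).1 : L) + ((P.symm y).2 : L) := by
      conv_lhs => rw [← P.apply_symm_apply y]
      exact Submodule.coe_prodEquivOfIsCompl' (p := Dsub) (q := C) hcompl (P.symm y)
    have hbr : ⁅x, y⁆ = ⁅((P.symm x).1 : L), ((P.symm y).1 : L)⁆ := by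
      conv_lhs => rw [hx, hy]
      rw [add_lie, lie_add, lie_add, hcentr, hcentr, hcentr' (P.symm y).2]
      simp
    have hPbr : P.symm ⁅x, y⁆ =
        (⟨⁅((P.symm x).1 : L), ((P.symm y).1 : L)⁆, hliemem _ _⟩, 0) := by
      rw [hbr]
      exact Submodule.prodEquivOfIsCompl_symm_apply_left (p := Dsub) (q := C) hcompl
        (⟨⁅((P.symm x).1 : L), ((P.symm y).1 : L)⁆, hliemem _ _⟩ : Dsub)
    show (φe.prodCongr χ) (P.symm ⁅x, y⁆) = ⁅(φe.prodCongr χ) (P.symm x), (φe.prodCongr χ) (P.symm y)⁆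
    rw [hPbr]
    apply Prod.ext
    · show φe ⟨⁅((P.symm x).1 : L), ((P.symm y).1 : L)⁆, hliemem _ _⟩
        = ⁅φe (P.symm x).1, φe (P.symm y).1⁆
      exact hφlie _ _
    · show χ 0 = ⁅χ (P.symm x).2, χ (P.symm y).2⁆
      rw [map_zero, pi_br]
  exact ⟨{ toLinearMap := (total : L →ₗ[ℝ] (so3 × (Fin 2 → ℝ))),
           map_lie' := fun {x y} => hmaplie x y,
           invFun := total.symm,
           left_inv := total.left_inv,
           right_inv := total.right_inv }⟩
end

section
/- On the Lie algebra l with structure equations de¹ = −(3/4)e¹⁵ + (3√3/4)e²³ − (√3/4)e⁴⁵, de² = e²⁵, de³ = √3 e¹² − e²⁴ − e³⁵, de⁴ = −(5√3/4)e¹⁵ − (9/4)e²³ − (5/4)e⁴⁵, de⁵ = 0, the 3-form T = (√3/4)e¹²³ − √3 e¹⁴⁵ − (3/4)e²³⁴ satisfies dT = −(3/2)(e²³⁴⁵ + √3 e¹²³⁵) ≠ 0, while T ∧ E₁ = T ∧ E₂ = T ∧ E₃ = 0 for E₁ = √3e¹⁵ + e²³ + e⁴⁵, E₂ = √3e¹³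 + e²⁵ + e³⁴, E₃ = 2e²⁴ + e³⁵. -/
open Matrix

/-- Standard basis of `ℝ⁵` (shifted: `e₁ = e 0`, …, `e₅ = e 4`). -/
noncomputable def e (i : Fin 5) : Fin 5 → ℝ := Pi.single i 1

/-- The Lie bracket on `ℝ⁵` of the algebra with structure equations
`de¹ = −(3/4)e¹⁵ + (3√3/4)e²³ − (√3/4)e⁴⁵`, `de² = e²⁵`, `de³ = √3e¹² − e²⁴ − e³⁵`,
`de⁴ = −(5√3/4)e¹⁵ − (9/4)e²³ − (5/4)e⁴⁵`, `de⁵ = 0`. -/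
noncomputable def br (X Y : Fin 5 → ℝ) : Fin 5 → ℝ :=
  (X 0 * Y 4 - X 4 * Y 0) • ((3 / 4 : ℝ) • e 0 + (5 * Real.sqrt 3 / 4) • e 3) +
  (X 1 * Y 2 - X 2 * Y 1) • ((-(3 * Real.sqrt 3 / 4) : ℝ) • e 0 + (9 / 4 : ℝ) • e 3) +
  (X 3 * Y 4 - X 4 * Y 3) • ((Real.sqrt 3 / 4) • e 0 + (5 / 4 : ℝ) • e 3) +
  (X 1 * Y 4 - X 4 * Y 1) • (-(e 1)) +
  (X 0 * Y 1 - X 1 * Y 0) • ((-Real.sqrt 3 : ℝ) • e 2) +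
  (X 1 * Y 3 - X 3 * Y 1) • e 2 +
  (X 2 * Y 4 - X 4 * Y 2) • e 2

/-- The basis 3-form `e^i ∧ e^j ∧ e^k`. -/
noncomputable def w3 (i j k : Fin 5) (X Y Z : Fin 5 → ℝ) : ℝ :=
  Matrix.det !![X i, X j, X k; Y i, Y j, Y k; Z i, Z j, Z k]

/-- The basis 4-form `e^i ∧ e^j ∧ e^k ∧ e^l`. -/
noncomputable def w4 (i j k l : Fin 5) (X Y Z W : Fin 5 → ℝ) : ℝ :=
  Matrix.det !![X i, X j, X k, X l; Y i, Y j, Y k, Y l;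
                Z i, Z j, Z k, Z l; W i, W j, W k, W l]

/-- The torsion 3-form `T = (√3/4)e¹²³ − √3 e¹⁴⁵ − (3/4)e²³⁴`. -/
noncomputable def Tform (X Y Z : Fin 5 → ℝ) : ℝ :=
  Real.sqrt 3 / 4 * w3 0 1 2 X Y Z - Real.sqrt 3 * w3 0 3 4 X Y Z - 3 / 4 * w3 1 2 3 X Y Z

/-- The Chevalley–Eilenberg differential of the 3-form `T`. -/
noncomputable def dT (X Y Z W : Fin 5 → ℝ) : ℝ :=
  -Tform (br X Y) Z W + Tform (br X Z) Y W - Tform (br X W) Y Z -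
    Tform (br Y Z) X W + Tform (br Y W) X Z - Tform (br Z W) X Y

/-- The 2-form `E₁ = √3e¹⁵ + e²³ + e⁴⁵`. -/
noncomputable def E1f (X Y : Fin 5 → ℝ) : ℝ :=
  Real.sqrt 3 * (X 0 * Y 4 - X 4 * Y 0) + (X 1 * Y 2 - X 2 * Y 1) + (X 3 * Y 4 - X 4 * Y 3)

/-- The 2-form `E₂ = √3e¹³ + e²⁵ + e³⁴`. -/
noncomputable def E2f (X Y : Fin 5 → ℝ) : ℝ :=
  Real.sqrt 3 * (X 0 * Y 2 - X 2 * Y 0) + (X 1 * Y 4 - X 4 * Y 1) + (X 2 * Y 3 - X 3 * Y 2)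

/-- The 2-form `E₃ = 2e²⁴ + e³⁵`. -/
noncomputable def E3f (X Y : Fin 5 → ℝ) : ℝ :=
  2 * (X 1 * Y 3 - X 3 * Y 1) + (X 2 * Y 4 - X 4 * Y 2)

/-- The wedge `T ∧ E` of the 3-form `T` with a 2-form `E`, as a 5-form. -/
noncomputable def wedgeTE (E : (Fin 5 → ℝ) → (Fin 5 → ℝ) → ℝ)
    (X : Fin 5 → (Fin 5 → ℝ)) : ℝ :=
  (1 / 12 : ℝ) * ∑ σ : Equiv.Perm (Fin 5), (Equiv.Perm.sign σ : ℤ) *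
    (Tform (X (σ 0)) (X (σ 1)) (X (σ 2)) * E (X (σ 3)) (X (σ 4)))


section Helpers
open Equiv Equiv.Perm

private lemma permSum (F : Equiv.Perm (Fin 5) → ℝ) :
    ∑ σ : Equiv.Perm (Fin 5), F σ =
    ∑ i : Fin 5, ∑ j : Fin 4, ∑ k : Fin 3, ∑ l : Fin 2,
      F (decomposeFin.symm (i, decomposeFin.symm (j, decomposeFin.symm (k, decomposeFin.symm (l, 1))))) := by
  rw [← Equiv.sum_comp (Equiv.Perm.decomposeFin.symm) F, Fintype.sum_prod_type]
  congr 1; funext i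
  rw [← Equiv.sum_comp (Equiv.Perm.decomposeFin.symm), Fintype.sum_prod_type]
  congr 1; funext j
  rw [← Equiv.sum_comp (Equiv.Perm.decomposeFin.symm), Fintype.sum_prod_type]
  congr 1; funext k
  rw [← Equiv.sum_comp (Equiv.Perm.decomposeFin.symm), Fintype.sum_prod_type]
  congr 1; funext l
  rw [Finset.sum_eq_single 1 (fun b _ hb => absurd (Subsingleton.elim b 1) hb) (by simp)]

private lemma d5_0 (i : Fin 5) (τ : Perm (Fin 4)) : decomposeFin.symm (i, τ) 0 = i := decomposeFin_symm_apply_zero i τ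
private lemma d5_1 (i : Fin 5) (τ : Perm (Fin 4)) : decomposeFin.symm (i, τ) 1 = swap 0 i ((τ 0).succ) := decomposeFin_symm_apply_succ τ i 0
private lemma d5_2 (i : Fin 5) (τ : Perm (Fin 4)) : decomposeFin.symm (i, τ) 2 = swap 0 i ((τ 1).succ) := decomposeFin_symm_apply_succ τ i 1
private lemma d5_3 (i : Fin 5) (τ : Perm (Fin 4)) : decomposeFin.symm (i, τ) 3 = swap 0 i ((τ 2).succ) := decomposeFin_symm_apply_succ τ i 2
private lemma d5_4 (i : Fin 5) (τ : Perm (Fin 4)) : decomposeFin.symm (i, τ) 4 = swap 0 i ((τ 3).succ) := decomposeFin_symm_apply_succ τ i 3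
private lemma d4_0 (i : Fin 4) (τ : Perm (Fin 3)) : decomposeFin.symm (i, τ) 0 = i := decomposeFin_symm_apply_zero i τ
private lemma d4_1 (i : Fin 4) (τ : Perm (Fin 3)) : decomposeFin.symm (i, τ) 1 = swap 0 i ((τ 0).succ) := decomposeFin_symm_apply_succ τ i 0
private lemma d4_2 (i : Fin 4) (τ : Perm (Fin 3)) : decomposeFin.symm (i, τ) 2 = swap 0 i ((τ 1).succ) := decomposeFin_symm_apply_succ τ i 1
private lemma d4_3 (i : Fin 4) (τ : Perm (Fin 3)) : decomposeFin.symm (i, τ) 3 = swap 0 i ((τ 2).succ) := decomposeFin_symm_apply_succ τ i 2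
private lemma d3_0 (i : Fin 3) (τ : Perm (Fin 2)) : decomposeFin.symm (i, τ) 0 = i := decomposeFin_symm_apply_zero i τ
private lemma d3_1 (i : Fin 3) (τ : Perm (Fin 2)) : decomposeFin.symm (i, τ) 1 = swap 0 i ((τ 0).succ) := decomposeFin_symm_apply_succ τ i 0
private lemma d3_2 (i : Fin 3) (τ : Perm (Fin 2)) : decomposeFin.symm (i, τ) 2 = swap 0 i ((τ 1).succ) := decomposeFin_symm_apply_succ τ i 1
private lemma d2_0 (i : Fin 2) (τ : Perm (Fin 1)) : decomposeFin.symm (i, τ) 0 = i := decomposeFin_symm_apply_zero i τ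
private lemma d2_1 (i : Fin 2) (τ : Perm (Fin 1)) : decomposeFin.symm (i, τ) 1 = swap 0 i ((τ 0).succ) := decomposeFin_symm_apply_succ τ i 0

private lemma sw4 (a b x : Fin 4) : swap a b x = if x = a then b else if x = b then a else x := Equiv.swap_apply_def a b x
private lemma sw3 (a b x : Fin 3) : swap a b x = if x = a then b else if x = b then a else x := Equiv.swap_apply_def a b x
private lemma sw2 (a b x : Fin 2) : swap a b x = if x = a then b else if x = b then a else x := Equiv.swap_apply_def a b x

private lemma s40 : Fin.succ (0 : Fin 4) = 1 := rfl
private lemma s41 : Fin.succ (1 : Fin 4) = 2 := rfl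
private lemma s42 : Fin.succ (2 : Fin 4) = 3 := rfl
private lemma s43 : Fin.succ (3 : Fin 4) = 4 := rfl
private lemma s30 : Fin.succ (0 : Fin 3) = 1 := rfl
private lemma s31 : Fin.succ (1 : Fin 3) = 2 := rfl
private lemma s32 : Fin.succ (2 : Fin 3) = 3 := rfl
private lemma s20 : Fin.succ (0 : Fin 2) = 1 := rfl
private lemma s21 : Fin.succ (1 : Fin 2) = 2 := rfl
private lemma s10 : Fin.succ (0 : Fin 1) = 1 := rfl

private lemma swE5_0_0 : Equiv.swap (0 : Fin 5) 0 0 = 0 := by decide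
private lemma swE5_0_1 : Equiv.swap (0 : Fin 5) 0 1 = 1 := by decide
private lemma swE5_0_2 : Equiv.swap (0 : Fin 5) 0 2 = 2 := by decide
private lemma swE5_0_3 : Equiv.swap (0 : Fin 5) 0 3 = 3 := by decide
private lemma swE5_0_4 : Equiv.swap (0 : Fin 5) 0 4 = 4 := by decide
private lemma swE5_1_0 : Equiv.swap (0 : Fin 5) 1 0 = 1 := by decide
private lemma swE5_1_1 : Equiv.swap (0 : Fin 5) 1 1 = 0 := by decide
private lemma swE5_1_2 : Equiv.swap (0 : Fin 5) 1 2 = 2 := by decide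
private lemma swE5_1_3 : Equiv.swap (0 : Fin 5) 1 3 = 3 := by decide
private lemma swE5_1_4 : Equiv.swap (0 : Fin 5) 1 4 = 4 := by decide
private lemma swE5_2_0 : Equiv.swap (0 : Fin 5) 2 0 = 2 := by decide
private lemma swE5_2_1 : Equiv.swap (0 : Fin 5) 2 1 = 1 := by decide
private lemma swE5_2_2 : Equiv.swap (0 : Fin 5) 2 2 = 0 := by decide
private lemma swE5_2_3 : Equiv.swap (0 : Fin 5) 2 3 = 3 := by decide
private lemma swE5_2_4 : Equiv.swap (0 : Fin 5) 2 4 = 4 := by decide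
private lemma swE5_3_0 : Equiv.swap (0 : Fin 5) 3 0 = 3 := by decide
private lemma swE5_3_1 : Equiv.swap (0 : Fin 5) 3 1 = 1 := by decide
private lemma swE5_3_2 : Equiv.swap (0 : Fin 5) 3 2 = 2 := by decide
private lemma swE5_3_3 : Equiv.swap (0 : Fin 5) 3 3 = 0 := by decide
private lemma swE5_3_4 : Equiv.swap (0 : Fin 5) 3 4 = 4 := by decide
private lemma swE5_4_0 : Equiv.swap (0 : Fin 5) 4 0 = 4 := by decide
private lemma swE5_4_1 : Equiv.swap (0 : Fin 5) 4 1 = 1 := by decide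
private lemma swE5_4_2 : Equiv.swap (0 : Fin 5) 4 2 = 2 := by decide
private lemma swE5_4_3 : Equiv.swap (0 : Fin 5) 4 3 = 3 := by decide
private lemma swE5_4_4 : Equiv.swap (0 : Fin 5) 4 4 = 0 := by decide
private lemma swE4_0_0 : Equiv.swap (0 : Fin 4) 0 0 = 0 := by decide
private lemma swE4_0_1 : Equiv.swap (0 : Fin 4) 0 1 = 1 := by decide
private lemma swE4_0_2 : Equiv.swap (0 : Fin 4) 0 2 = 2 := by decide
private lemma swE4_0_3 : Equiv.swap (0 : Fin 4) 0 3 = 3 := by decide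
private lemma swE4_1_0 : Equiv.swap (0 : Fin 4) 1 0 = 1 := by decide
private lemma swE4_1_1 : Equiv.swap (0 : Fin 4) 1 1 = 0 := by decide
private lemma swE4_1_2 : Equiv.swap (0 : Fin 4) 1 2 = 2 := by decide
private lemma swE4_1_3 : Equiv.swap (0 : Fin 4) 1 3 = 3 := by decide
private lemma swE4_2_0 : Equiv.swap (0 : Fin 4) 2 0 = 2 := by decide
private lemma swE4_2_1 : Equiv.swap (0 : Fin 4) 2 1 = 1 := by decide
private lemma swE4_2_2 : Equiv.swap (0 : Fin 4) 2 2 = 0 := by decide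
private lemma swE4_2_3 : Equiv.swap (0 : Fin 4) 2 3 = 3 := by decide
private lemma swE4_3_0 : Equiv.swap (0 : Fin 4) 3 0 = 3 := by decide
private lemma swE4_3_1 : Equiv.swap (0 : Fin 4) 3 1 = 1 := by decide
private lemma swE4_3_2 : Equiv.swap (0 : Fin 4) 3 2 = 2 := by decide
private lemma swE4_3_3 : Equiv.swap (0 : Fin 4) 3 3 = 0 := by decide
private lemma swE3_0_0 : Equiv.swap (0 : Fin 3) 0 0 = 0 := by decide
private lemma swE3_0_1 : Equiv.swap (0 : Fin 3) 0 1 = 1 := by decide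
private lemma swE3_0_2 : Equiv.swap (0 : Fin 3) 0 2 = 2 := by decide
private lemma swE3_1_0 : Equiv.swap (0 : Fin 3) 1 0 = 1 := by decide
private lemma swE3_1_1 : Equiv.swap (0 : Fin 3) 1 1 = 0 := by decide
private lemma swE3_1_2 : Equiv.swap (0 : Fin 3) 1 2 = 2 := by decide
private lemma swE3_2_0 : Equiv.swap (0 : Fin 3) 2 0 = 2 := by decide
private lemma swE3_2_1 : Equiv.swap (0 : Fin 3) 2 1 = 1 := by decide
private lemma swE3_2_2 : Equiv.swap (0 : Fin 3) 2 2 = 0 := by decide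
private lemma swE2_0_0 : Equiv.swap (0 : Fin 2) 0 0 = 0 := by decide
private lemma swE2_0_1 : Equiv.swap (0 : Fin 2) 0 1 = 1 := by decide
private lemma swE2_1_0 : Equiv.swap (0 : Fin 2) 1 0 = 1 := by decide
private lemma swE2_1_1 : Equiv.swap (0 : Fin 2) 1 1 = 0 := by decide
private lemma sgn5_0 : (if (0 : Fin 5) = 0 then (1 : ℤˣ) else -1) = 1 := rfl
private lemma sgn5_1 : (if (1 : Fin 5) = 0 then (1 : ℤˣ) else -1) = -1 := rfl
private lemma sgn5_2 : (if (2 : Fin 5) = 0 then (1 : ℤˣ) else -1) = -1 := rfl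
private lemma sgn5_3 : (if (3 : Fin 5) = 0 then (1 : ℤˣ) else -1) = -1 := rfl
private lemma sgn5_4 : (if (4 : Fin 5) = 0 then (1 : ℤˣ) else -1) = -1 := rfl
private lemma sgn4_0 : (if (0 : Fin 4) = 0 then (1 : ℤˣ) else -1) = 1 := rfl
private lemma sgn4_1 : (if (1 : Fin 4) = 0 then (1 : ℤˣ) else -1) = -1 := rfl
private lemma sgn4_2 : (if (2 : Fin 4) = 0 then (1 : ℤˣ) else -1) = -1 := rfl
private lemma sgn4_3 : (if (3 : Fin 4) = 0 then (1 : ℤˣ) else -1) = -1 := rfl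
private lemma sgn3_0 : (if (0 : Fin 3) = 0 then (1 : ℤˣ) else -1) = 1 := rfl
private lemma sgn3_1 : (if (1 : Fin 3) = 0 then (1 : ℤˣ) else -1) = -1 := rfl
private lemma sgn3_2 : (if (2 : Fin 3) = 0 then (1 : ℤˣ) else -1) = -1 := rfl
private lemma sgn2_0 : (if (0 : Fin 2) = 0 then (1 : ℤˣ) else -1) = 1 := rfl
private lemma sgn2_1 : (if (1 : Fin 2) = 0 then (1 : ℤˣ) else -1) = -1 := rfl


open Equiv Equiv.Perm in
set_option maxHeartbeats 4000000 in
private lemma permSum5 (H : Fin 5 → Fin 5 → Fin 5 → Fin 5 → Fin 5 → ℝ) :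
    (∑ σ : Equiv.Perm (Fin 5), ((Equiv.Perm.sign σ : ℤ) : ℝ) * H (σ 0) (σ 1) (σ 2) (σ 3) (σ 4)) =
    H 0 1 2 3 4 - H 0 1 2 4 3 - H 0 1 3 2 4 + H 0 1 3 4 2 + H 0 1 4 2 3 - H 0 1 4 3 2 - H 0 2 1 3 4 + H 0 2 1 4 3 + H 0 2 3 1 4 - H 0 2 3 4 1 - H 0 2 4 1 3 + H 0 2 4 3 1 + H 0 3 1 2 4 - H 0 3 1 4 2 - H 0 3 2 1 4 + H 0 3 2 4 1 + H 0 3 4 1 2 - H 0 3 4 2 1 - H 0 4 1 2 3 + H 0 4 1 3 2 + H 0 4 2 1 3 - H 0 4 2 3 1 - H 0 4 3 1 2 + H 0 4 3 2 1 - H 1 0 2 3 4 + H 1 0 2 4 3 + H 1 0 3 2 4 - H 1 0 3 4 2 - H 1 0 4 2 3 + H 1 0 4 3 2 + H 1 2 0 3 4 - H 1 2 0 4 3 - H 1 2 3 0 4 + H 1 2 3 4 0 + H 1 2 4 0 3 - H 1 2 4 3 0 - H 1 3 0 2 4 + H 1 3 0 4 2 + H 1 3 2 0 4 - H 1 3 2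 4 0 - H 1 3 4 0 2 + H 1 3 4 2 0 + H 1 4 0 2 3 - H 1 4 0 3 2 - H 1 4 2 0 3 + H 1 4 2 3 0 + H 1 4 3 0 2 - H 1 4 3 2 0 + H 2 0 1 3 4 - H 2 0 1 4 3 - H 2 0 3 1 4 + H 2 0 3 4 1 + H 2 0 4 1 3 - H 2 0 4 3 1 - H 2 1 0 3 4 + H 2 1 0 4 3 + H 2 1 3 0 4 - H 2 1 3 4 0 - H 2 1 4 0 3 + H 2 1 4 3 0 + H 2 3 0 1 4 - H 2 3 0 4 1 - H 2 3 1 0 4 + H 2 3 1 4 0 + H 2 3 4 0 1 - H 2 3 4 1 0 - H 2 4 0 1 3 + H 2 4 0 3 1 + H 2 4 1 0 3 - H 2 4 1 3 0 - H 2 4 3 0 1 + H 2 4 3 1 0 - H 3 0 1 2 4 + H 3 0 1 4 2 + H 3 0 2 1 4 - H 3 0 2 4 1 - H 3 0 4 1 2 + H 3 0 4 2 1 + H 3 1 0 2 4 - H 3 1 0 4 2 - H 3 1 2 0 4 + H 3 1 2 4 0 + H 3 1 4 0 2 - H 3 1 4 2 0 - H 3 2 0 1 4 + H 3 2 0 4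 1 + H 3 2 1 0 4 - H 3 2 1 4 0 - H 3 2 4 0 1 + H 3 2 4 1 0 + H 3 4 0 1 2 - H 3 4 0 2 1 - H 3 4 1 0 2 + H 3 4 1 2 0 + H 3 4 2 0 1 - H 3 4 2 1 0 + H 4 0 1 2 3 - H 4 0 1 3 2 - H 4 0 2 1 3 + H 4 0 2 3 1 + H 4 0 3 1 2 - H 4 0 3 2 1 - H 4 1 0 2 3 + H 4 1 0 3 2 + H 4 1 2 0 3 - H 4 1 2 3 0 - H 4 1 3 0 2 + H 4 1 3 2 0 + H 4 2 0 1 3 - H 4 2 0 3 1 - H 4 2 1 0 3 + H 4 2 1 3 0 + H 4 2 3 0 1 - H 4 2 3 1 0 - H 4 3 0 1 2 + H 4 3 0 2 1 + H 4 3 1 0 2 - H 4 3 1 2 0 - H 4 3 2 0 1 + H 4 3 2 1 0 := by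
  rw [permSum]
  simp (config := { decide := true }) only [Fin.sum_univ_five, Fin.sum_univ_four, Fin.sum_univ_three, Fin.sum_univ_two,
    Equiv.Perm.decomposeFin.symm_sign, Equiv.Perm.sign_one, Equiv.Perm.one_apply,
    d5_0, d5_1, d5_2, d5_3, d5_4, d4_0, d4_1, d4_2, d4_3, d3_0, d3_1, d3_2, d2_0, d2_1,
    s40, s41, s42, s43, s30, s31, s32, s20, s21, s10,
    swE5_0_0, swE5_0_1, swE5_0_2, swE5_0_3, swE5_0_4, swE5_1_0, swE5_1_1, swE5_1_2, swE5_1_3, swE5_1_4, swE5_2_0, swE5_2_1, swE5_2_2, swE5_2_3, swE5_2_4, swE5_3_0, swE5_3_1, swE5_3_2, swE5_3_3, swE5_3_4, swE5_4_0, swE5_4_1, swE5_4_2, swE5_4_3, swE5_4_4, swE4_0_0, swE4_0_1, swE4_0_2, swE4_0_3, swE4_1_0, swE4_1_1, swE4_1_2, swE4_1_3, swE4_2_0, swE4_2_1, swE4_2_2, swE4_2_3, swE4_3_0, swE4_3_1, swE4_3_2, swE4_3_3, swE3_0_0, swE3_0_1, swE3_0_2, swE3_1_0, swE3_1_1, swE3_1_2,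 swE3_2_0, swE3_2_1, swE3_2_2, swE2_0_0, swE2_0_1, swE2_1_0, swE2_1_1,
    if_true, if_false, ite_true, ite_false,
    mul_one, one_mul, neg_mul, mul_neg, neg_neg, Units.val_one, Units.val_neg,
    Int.cast_one, Int.cast_neg]
  ring

end Helpers

private lemma saA5_0_0 : Fin.succAbove (0 : Fin 5) (0 : Fin 4) = 1 := by decide
private lemma saA5_0_1 : Fin.succAbove (0 : Fin 5) (1 : Fin 4) = 2 := by decide
private lemma saA5_0_2 : Fin.succAbove (0 : Fin 5) (2 : Fin 4) = 3 := by decide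
private lemma saA5_0_3 : Fin.succAbove (0 : Fin 5) (3 : Fin 4) = 4 := by decide
private lemma saA5_1_0 : Fin.succAbove (1 : Fin 5) (0 : Fin 4) = 0 := by decide
private lemma saA5_1_1 : Fin.succAbove (1 : Fin 5) (1 : Fin 4) = 2 := by decide
private lemma saA5_1_2 : Fin.succAbove (1 : Fin 5) (2 : Fin 4) = 3 := by decide
private lemma saA5_1_3 : Fin.succAbove (1 : Fin 5) (3 : Fin 4) = 4 := by decide
private lemma saA5_2_0 : Fin.succAbove (2 : Fin 5) (0 : Fin 4) = 0 := by decide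
private lemma saA5_2_1 : Fin.succAbove (2 : Fin 5) (1 : Fin 4) = 1 := by decide
private lemma saA5_2_2 : Fin.succAbove (2 : Fin 5) (2 : Fin 4) = 3 := by decide
private lemma saA5_2_3 : Fin.succAbove (2 : Fin 5) (3 : Fin 4) = 4 := by decide
private lemma saA5_3_0 : Fin.succAbove (3 : Fin 5) (0 : Fin 4) = 0 := by decide
private lemma saA5_3_1 : Fin.succAbove (3 : Fin 5) (1 : Fin 4) = 1 := by decide
private lemma saA5_3_2 : Fin.succAbove (3 : Fin 5) (2 : Fin 4) = 2 := by decide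
private lemma saA5_3_3 : Fin.succAbove (3 : Fin 5) (3 : Fin 4) = 4 := by decide
private lemma saA5_4_0 : Fin.succAbove (4 : Fin 5) (0 : Fin 4) = 0 := by decide
private lemma saA5_4_1 : Fin.succAbove (4 : Fin 5) (1 : Fin 4) = 1 := by decide
private lemma saA5_4_2 : Fin.succAbove (4 : Fin 5) (2 : Fin 4) = 2 := by decide
private lemma saA5_4_3 : Fin.succAbove (4 : Fin 5) (3 : Fin 4) = 3 := by decide
private lemma saA4_0_0 : Fin.succAbove (0 : Fin 4) (0 : Fin 3) = 1 := by decide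
private lemma saA4_0_1 : Fin.succAbove (0 : Fin 4) (1 : Fin 3) = 2 := by decide
private lemma saA4_0_2 : Fin.succAbove (0 : Fin 4) (2 : Fin 3) = 3 := by decide
private lemma saA4_1_0 : Fin.succAbove (1 : Fin 4) (0 : Fin 3) = 0 := by decide
private lemma saA4_1_1 : Fin.succAbove (1 : Fin 4) (1 : Fin 3) = 2 := by decide
private lemma saA4_1_2 : Fin.succAbove (1 : Fin 4) (2 : Fin 3) = 3 := by decide
private lemma saA4_2_0 : Fin.succAbove (2 : Fin 4) (0 : Fin 3) = 0 := by decide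
private lemma saA4_2_1 : Fin.succAbove (2 : Fin 4) (1 : Fin 3) = 1 := by decide
private lemma saA4_2_2 : Fin.succAbove (2 : Fin 4) (2 : Fin 3) = 3 := by decide
private lemma saA4_3_0 : Fin.succAbove (3 : Fin 4) (0 : Fin 3) = 0 := by decide
private lemma saA4_3_1 : Fin.succAbove (3 : Fin 4) (1 : Fin 3) = 1 := by decide
private lemma saA4_3_2 : Fin.succAbove (3 : Fin 4) (2 : Fin 3) = 2 := by decide
private lemma saA3_0_0 : Fin.succAbove (0 : Fin 3) (0 : Fin 2) = 1 := by decide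
private lemma saA3_0_1 : Fin.succAbove (0 : Fin 3) (1 : Fin 2) = 2 := by decide
private lemma saA3_1_0 : Fin.succAbove (1 : Fin 3) (0 : Fin 2) = 0 := by decide
private lemma saA3_1_1 : Fin.succAbove (1 : Fin 3) (1 : Fin 2) = 2 := by decide
private lemma saA3_2_0 : Fin.succAbove (2 : Fin 3) (0 : Fin 2) = 0 := by decide
private lemma saA3_2_1 : Fin.succAbove (2 : Fin 3) (1 : Fin 2) = 1 := by decide
private lemma csA4_0 : Fin.castSucc (0 : Fin 4) = 0 := by decide
private lemma csA4_1 : Fin.castSucc (1 : Fin 4) = 1 := by decide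
private lemma csA4_2 : Fin.castSucc (2 : Fin 4) = 2 := by decide
private lemma csA4_3 : Fin.castSucc (3 : Fin 4) = 3 := by decide
private lemma csA3_0 : Fin.castSucc (0 : Fin 3) = 0 := by decide
private lemma csA3_1 : Fin.castSucc (1 : Fin 3) = 1 := by decide
private lemma csA3_2 : Fin.castSucc (2 : Fin 3) = 2 := by decide
private lemma csA2_0 : Fin.castSucc (0 : Fin 2) = 0 := by decide
private lemma csA2_1 : Fin.castSucc (1 : Fin 2) = 1 := by decide

private lemma Tform_explicit (A B C : Fin 5 → ℝ) : Tform A B C =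
    Real.sqrt 3 / 4 * ((A 0 * B 1 * C 2) - (A 0 * B 2 * C 1) - (A 1 * B 0 * C 2) + (A 1 * B 2 * C 0) + (A 2 * B 0 * C 1) - (A 2 * B 1 * C 0)) - Real.sqrt 3 * ((A 0 * B 3 * C 4) - (A 0 * B 4 * C 3) - (A 3 * B 0 * C 4) + (A 3 * B 4 * C 0) + (A 4 * B 0 * C 3) - (A 4 * B 3 * C 0)) - 3 / 4 * ((A 1 * B 2 * C 3) - (A 1 * B 3 * C 2) - (A 2 * B 1 * C 3) + (A 2 * B 3 * C 1) + (A 3 * B 1 * C 2) - (A 3 * B 2 * C 1)) := by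
  simp [Tform, w3, Matrix.det_fin_three]
  try ring

private lemma w4a_explicit (A B C D : Fin 5 → ℝ) : w4 1 2 3 4 A B C D =
    (A 1 * B 2 * C 3 * D 4) - (A 1 * B 2 * C 4 * D 3) - (A 1 * B 3 * C 2 * D 4) + (A 1 * B 3 * C 4 * D 2) + (A 1 * B 4 * C 2 * D 3) - (A 1 * B 4 * C 3 * D 2) - (A 2 * B 1 * C 3 * D 4) + (A 2 * B 1 * C 4 * D 3) + (A 2 * B 3 * C 1 * D 4) - (A 2 * B 3 * C 4 * D 1) - (A 2 * B 4 * C 1 * D 3) + (A 2 * B 4 * C 3 * D 1) + (A 3 * B 1 * C 2 * D 4) - (A 3 * B 1 * C 4 * D 2) - (A 3 * B 2 * C 1 * D 4) + (A 3 * B 2 * C 4 * D 1) + (A 3 * B 4 * C 1 * D 2) - (A 3 * B 4 * C 2 * D 1) - (A 4 * B 1 * C 2 * D 3) + (A 4 * B 1 * C 3 * D 2) + (A 4 * B 2 * C 1 * D 3) - (A 4 * B 2 * C 3 * D 1) - (A 4 * B 3 * C 1 * D 2) + (A 4 * B 3 * C 2 * D 1) := by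
  simp [w4, Matrix.det_succ_row_zero, Fin.sum_univ_succ, Matrix.det_fin_three, saA5_0_0, saA5_0_1, saA5_0_2, saA5_0_3, saA5_1_0, saA5_1_1, saA5_1_2, saA5_1_3, saA5_2_0, saA5_2_1, saA5_2_2, saA5_2_3, saA5_3_0, saA5_3_1, saA5_3_2, saA5_3_3, saA5_4_0, saA5_4_1, saA5_4_2, saA5_4_3, saA4_0_0, saA4_0_1, saA4_0_2, saA4_1_0, saA4_1_1, saA4_1_2, saA4_2_0, saA4_2_1, saA4_2_2, saA4_3_0, saA4_3_1, saA4_3_2, saA3_0_0, saA3_0_1, saA3_1_0, saA3_1_1, saA3_2_0, saA3_2_1, csA4_0, csA4_1, csA4_2, csA4_3, csA3_0, csA3_1, csA3_2, csA2_0, csA2_1]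
  try ring

private lemma w4b_explicit (A B C D : Fin 5 → ℝ) : w4 0 1 2 4 A B C D =
    (A 0 * B 1 * C 2 * D 4) - (A 0 * B 1 * C 4 * D 2) - (A 0 * B 2 * C 1 * D 4) + (A 0 * B 2 * C 4 * D 1) + (A 0 * B 4 * C 1 * D 2) - (A 0 * B 4 * C 2 * D 1) - (A 1 * B 0 * C 2 * D 4) + (A 1 * B 0 * C 4 * D 2) + (A 1 * B 2 * C 0 * D 4) - (A 1 * B 2 * C 4 * D 0) - (A 1 * B 4 * C 0 * D 2) + (A 1 * B 4 * C 2 * D 0) + (A 2 * B 0 * C 1 * D 4) - (A 2 * B 0 * C 4 * D 1) - (A 2 * B 1 * C 0 * D 4) + (A 2 * B 1 * C 4 * D 0) + (A 2 * B 4 * C 0 * D 1) - (A 2 * B 4 * C 1 * D 0) - (A 4 * B 0 * C 1 * D 2) + (A 4 * B 0 * C 2 * D 1) + (A 4 * B 1 * C 0 * D 2) - (A 4 * B 1 * C 2 * D 0) - (A 4 * B 2 * C 0 * D 1) + (A 4 * B 2 * C 1 * D 0) := by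
  simp [w4, Matrix.det_succ_row_zero, Fin.sum_univ_succ, Matrix.det_fin_three, saA5_0_0, saA5_0_1, saA5_0_2, saA5_0_3, saA5_1_0, saA5_1_1, saA5_1_2, saA5_1_3, saA5_2_0, saA5_2_1, saA5_2_2, saA5_2_3, saA5_3_0, saA5_3_1, saA5_3_2, saA5_3_3, saA5_4_0, saA5_4_1, saA5_4_2, saA5_4_3, saA4_0_0, saA4_0_1, saA4_0_2, saA4_1_0, saA4_1_1, saA4_1_2, saA4_2_0, saA4_2_1, saA4_2_2, saA4_3_0, saA4_3_1, saA4_3_2, saA3_0_0, saA3_0_1, saA3_1_0, saA3_1_1, saA3_2_0, saA3_2_1, csA4_0, csA4_1, csA4_2, csA4_3, csA3_0, csA3_1, csA3_2, csA2_0, csA2_1]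
  try ring

private lemma br0 (X Y : Fin 5 → ℝ) : br X Y 0 =
    (X 0 * Y 4 - X 4 * Y 0) * (3 / 4) + (X 1 * Y 2 - X 2 * Y 1) * (-(3 * Real.sqrt 3 / 4))
      + (X 3 * Y 4 - X 4 * Y 3) * (Real.sqrt 3 / 4) := by
  simp [br, e, Pi.single_apply]; try ring

private lemma br1 (X Y : Fin 5 → ℝ) : br X Y 1 = -(X 1 * Y 4 - X 4 * Y 1) := by
  simp [br, e, Pi.single_apply]

private lemma br2 (X Y : Fin 5 → ℝ) : br X Y 2 =
    (X 0 * Y 1 - X 1 * Y 0) * (-Real.sqrt 3) + (X 1 * Y 3 - X 3 * Y 1) + (X 2 * Y 4 - X 4 * Y 2) := by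
  simp [br, e, Pi.single_apply]; try ring

private lemma br3 (X Y : Fin 5 → ℝ) : br X Y 3 =
    (X 0 * Y 4 - X 4 * Y 0) * (5 * Real.sqrt 3 / 4) + (X 1 * Y 2 - X 2 * Y 1) * (9 / 4)
      + (X 3 * Y 4 - X 4 * Y 3) * (5 / 4) := by
  simp [br, e, Pi.single_apply]; try ring

private lemma br4 (X Y : Fin 5 → ℝ) : br X Y 4 = 0 := by
  simp [br, e, Pi.single_apply]

private lemma sqrt3_sq : Real.sqrt 3 ^ 2 = 3 := Real.sq_sqrt (by norm_num)

set_option maxHeartbeats 4000000 in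
private lemma dT_eq (X Y Z W : Fin 5 → ℝ) : dT X Y Z W =
    -(3 / 2) * (w4 1 2 3 4 X Y Z W + Real.sqrt 3 * w4 0 1 2 4 X Y Z W) := by
  simp only [dT, Tform_explicit, w4a_explicit, w4b_explicit, br0, br1, br2, br3, br4]
  ring_nf
  simp only [sqrt3_sq]
  ring

set_option maxHeartbeats 8000000 in
private lemma wedge1 (X : Fin 5 → (Fin 5 → ℝ)) : wedgeTE E1f X = 0 := by
  simp only [wedgeTE]
  rw [permSum5 (fun a b c d e => Tform (X a) (X b) (X c) * E1f (X d) (X e))]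
  simp only [Tform_explicit, E1f]
  ring

set_option maxHeartbeats 8000000 in
private lemma wedge2 (X : Fin 5 → (Fin 5 → ℝ)) : wedgeTE E2f X = 0 := by
  simp only [wedgeTE]
  rw [permSum5 (fun a b c d e => Tform (X a) (X b) (X c) * E2f (X d) (X e))]
  simp only [Tform_explicit, E2f]
  ring

set_option maxHeartbeats 8000000 in
private lemma wedge3 (X : Fin 5 → (Fin 5 → ℝ)) : wedgeTE E3f X = 0 := by
  simp only [wedgeTE]
  rw [permSum5 (fun a b c d e => Tform (X a) (X b) (X c) * E3f (X d) (X e))]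
  simp only [Tform_explicit, E3f]
  ring

/-- On the Lie algebra of statement 16, the 3-form `T = (√3/4)e¹²³ − √3e¹⁴⁵ − (3/4)e²³⁴`
satisfies `dT = −(3/2)(e²³⁴⁵ + √3 e¹²³⁵) ≠ 0`, while `T ∧ E₁ = T ∧ E₂ = T ∧ E₃ = 0`
(pure type `Λ²₇`). -/
theorem stmt17 :
    (∀ X Y Z W : Fin 5 → ℝ, dT X Y Z W =
      -(3 / 2) * (w4 1 2 3 4 X Y Z W + Real.sqrt 3 * w4 0 1 2 4 X Y Z W)) ∧
    dT (e 1) (e 2) (e 3) (e 4) ≠ 0 ∧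
    (∀ X : Fin 5 → (Fin 5 → ℝ), wedgeTE E1f X = 0) ∧
    (∀ X : Fin 5 → (Fin 5 → ℝ), wedgeTE E2f X = 0) ∧
    (∀ X : Fin 5 → (Fin 5 → ℝ), wedgeTE E3f X = 0) := by
  refine ⟨dT_eq, ?_, wedge1, wedge2, wedge3⟩
  rw [dT_eq]
  have h1 : w4 1 2 3 4 (e 1) (e 2) (e 3) (e 4) = 1 := by
    simp (config := { decide := true }) [w4, e, Matrix.det_succ_row_zero, Fin.sum_univ_succ, Matrix.det_fin_three, saA5_0_0, saA5_0_1, saA5_0_2, saA5_0_3, saA5_1_0, saA5_1_1, saA5_1_2, saA5_1_3, saA5_2_0, saA5_2_1, saA5_2_2, saA5_2_3, saA5_3_0, saA5_3_1, saA5_3_2, saA5_3_3, saA5_4_0, saA5_4_1, saA5_4_2, saA5_4_3, saA4_0_0, saA4_0_1, saA4_0_2, saA4_1_0, saA4_1_1, saA4_1_2, saA4_2_0, saA4_2_1, saA4_2_2, saA4_3_0, saA4_3_1, saA4_3_2, saA3_0_0, saA3_0_1, saA3_1_0, saA3_1_1, saA3_2_0, saA3_2_1, csA4_0, csA4_1,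 csA4_2, csA4_3, csA3_0, csA3_1, csA3_2, csA2_0, csA2_1, Pi.single_apply]
  have h2 : w4 0 1 2 4 (e 1) (e 2) (e 3) (e 4) = 0 := by
    simp (config := { decide := true }) [w4, e, Matrix.det_succ_row_zero, Fin.sum_univ_succ, Matrix.det_fin_three, saA5_0_0, saA5_0_1, saA5_0_2, saA5_0_3, saA5_1_0, saA5_1_1, saA5_1_2, saA5_1_3, saA5_2_0, saA5_2_1, saA5_2_2, saA5_2_3, saA5_3_0, saA5_3_1, saA5_3_2, saA5_3_3, saA5_4_0, saA5_4_1, saA5_4_2, saA5_4_3, saA4_0_0, saA4_0_1, saA4_0_2, saA4_1_0, saA4_1_1, saA4_1_2, saA4_2_0, saA4_2_1, saA4_2_2, saA4_3_0, saA4_3_1, saA4_3_2, saA3_0_0, saA3_0_1, saA3_1_0, saA3_1_1, saA3_2_0, saA3_2_1, csA4_0, csA4_1, csA4_2, csA4_3, csA3_0, csA3_1, csA3_2, csA2_0, csA2_1, Pi.single_apply]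
  rw [h1, h2]
  norm_num
end
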